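/- For every l ∈ ℕ and ρ > 0 there exist constants c, C > 0 (depending only on l) such that for every f ∈ K^{l,ρ}: c · ‖ e^{2πρ|k|}(1 + |k|^l) · 𝓕f(k) ‖_{ℓ²(ℤ)} ≤ ‖f‖_{K^{l,ρ}} ≤ C · ‖ e^{2πρ|k|}(1 + |k|^l) · 𝓕f(k) ‖_{ℓ²(ℤ)}, where 𝓕f(k) := ∫_𝕋 f(s) e^{−2πiks} ds are the Fourier coefficients of the restriction of f to the real line. -/

import Mathlib

/- STATEMENT 18: (Equivalence of the K^{l,ρ} norm with a weighted Sobolev norm on the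
Fourier side.) For every l ∈ ℕ there are constants c, C > 0 depending only on l such
that for every ρ > 0 and every f ∈ K^{l,ρ}:
  c·‖e^{2πρ|k|}(1+|k|^l)𝓕f(k)‖_{ℓ²(ℤ)} ≤ ‖f‖_{K^{l,ρ}} ≤ C·‖e^{2πρ|k|}(1+|k|^l)𝓕f(k)‖_{ℓ²(ℤ)},
where 𝓕f(k) = ∫_𝕋 f(s)e^{−2πiks} ds are the Fourier coefficients of the restriction of
f to the real line. -/

open MeasureTheory intervalIntegral Complex Real

noncomputable section

/-- The horizontal strip `U_ρ = {w : |Im w| < ρ}`. -/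
def Strip (ρ : ℝ) : Set ℂ := {w : ℂ | |w.im| < ρ}

/-- The `L²` norm over one period of a function on the real line. -/
noncomputable def L2Tnorm (f : ℝ → ℂ) : ℝ :=
  (∫ s in (0:ℝ)..1, ‖f s‖ ^ 2) ^ (1/2 : ℝ)

/-- The `K^{l,ρ}` norm. -/
noncomputable def Knorm (l : ℕ) (ρ : ℝ) (f : ℂ → ℂ) : ℝ :=
  ∑ α ∈ Finset.range (l + 1),
    sSup {r : ℝ | ∃ y : ℝ, |y| < ρ ∧
      r = L2Tnorm (fun s : ℝ => iteratedDeriv α f (s + y * Complex.I))}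

/-- Membership in `K^{l,ρ}`. -/
def MemK (l : ℕ) (ρ : ℝ) (f : ℂ → ℂ) : Prop :=
  DifferentiableOn ℂ f (Strip ρ) ∧
  (∀ w ∈ Strip ρ, f (w + 1) = f w) ∧
  ∀ α ≤ l,
    (∀ y : ℝ, |y| < ρ →
      IntervalIntegrable (fun s : ℝ => ‖iteratedDeriv α f (s + y * Complex.I)‖ ^ 2)
        MeasureTheory.volume 0 1) ∧
    BddAbove {r : ℝ | ∃ y : ℝ, |y| < ρ ∧
      r = L2Tnorm (fun s : ℝ => iteratedDeriv α f (s + y * Complex.I))}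

/-- The `k`-th Fourier coefficient of the restriction of `f : ℂ → ℂ` to ℝ. -/
noncomputable def fourierCoef (f : ℂ → ℂ) (k : ℤ) : ℂ :=
  ∫ s in (0:ℝ)..1, f (s : ℂ) * Complex.exp (-2 * π * Complex.I * k * s)

/-- The weighted `ℓ²(ℤ)` norm `‖e^{2πρ|k|}(1+|k|^l)𝓕f(k)‖_{ℓ²(ℤ)}`. -/
noncomputable def fourierWeightedNorm (l : ℕ) (ρ : ℝ) (f : ℂ → ℂ) : ℝ :=
  (∑' k : ℤ, (Real.exp (2 * π * ρ * |(k : ℝ)|) * (1 + |(k : ℝ)| ^ l) *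
      ‖fourierCoef f k‖) ^ 2) ^ (1/2 : ℝ)

/-!
For `g` holomorphic and 1-periodic on the strip `|Im w| < ρ`, Cauchy's theorem on the rectangle
`[0, 1] × [0, y]` shows that the Fourier coefficients of `s ↦ g (s + i y)` are
`e^{-2πky} ĝ(k)`, and integration by parts that those of `g'` are `2πik ĝ(k)`. By Parseval,
`‖g(· + iy)‖²_{L²(𝕋)} = Σ_k e^{-4πky} |ĝ(k)|²`; since `e^{4πρ|k|}` is the limit of one of
`e^{∓4πky}` as `y → ρ`, the supremum of these norms over `|y| < ρ` is comparable to
`‖e^{2πρ|k|} ĝ(k)‖_{ℓ²}`. Applied to `g = f^{(α)}`, `α ≤ l`, it remains to compare the symbols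
`(2π|k|)^α` with the weight `1 + |k|^l`.
-/

lemma isOpen_strip (ρ : ℝ) : IsOpen (Strip ρ) :=
  isOpen_lt (continuous_abs.comp continuous_im) continuous_const

lemma add_mul_I_mem_strip {ρ y : ℝ} (hy : |y| < ρ) (s : ℝ) : (s + y * I : ℂ) ∈ Strip ρ := by
  simpa [Strip] using hy

lemma mem_strip_of_im_mem_uIcc {ρ y : ℝ} (hy : |y| < ρ) {w : ℂ} (hw : w.im ∈ Set.uIcc 0 y) :
    w ∈ Strip ρ := by
  have h := Set.abs_sub_left_of_mem_uIcc hw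
  rw [sub_zero, sub_zero] at h
  exact h.trans_lt hy

section HolomorphicPeriodic

variable {ρ : ℝ} {g : ℂ → ℂ}

lemma deriv_add_one_of_periodic (hp : ∀ w ∈ Strip ρ, g (w + 1) = g w) :
    ∀ w ∈ Strip ρ, deriv g (w + 1) = deriv g w := by
  intro w hw
  rw [← deriv_comp_add_const]
  refine Filter.EventuallyEq.deriv_eq ?_
  filter_upwards [(isOpen_strip ρ).mem_nhds hw] with x hx using hp x hx

lemma differentiableOn_iteratedDeriv (hd : DifferentiableOn ℂ g (Strip ρ)) (α : ℕ) :
    DifferentiableOn ℂ (iteratedDeriv α g) (Strip ρ) := by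
  induction α with
  | zero => simpa using hd
  | succ α ih => simpa only [iteratedDeriv_succ] using ih.deriv (isOpen_strip ρ)

lemma iteratedDeriv_add_one_of_periodic (hp : ∀ w ∈ Strip ρ, g (w + 1) = g w) (α : ℕ) :
    ∀ w ∈ Strip ρ, iteratedDeriv α g (w + 1) = iteratedDeriv α g w := by
  induction α with
  | zero => simpa using hp
  | succ α ih => simpa only [iteratedDeriv_succ] using deriv_add_one_of_periodic ih

end HolomorphicPeriodic

lemma fourierCoeffOn_zero_one (h : ℝ → ℂ) (k : ℤ) :
    fourierCoeffOn zero_lt_one h k = ∫ s in (0:ℝ)..1, h s * exp (-2 * π * I * k * s) := by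
  rw [fourierCoeffOn_eq_integral]
  simp only [sub_zero, div_one, one_smul, smul_eq_mul, fourier_coe_apply]
  refine intervalIntegral.integral_congr fun s _ => ?_
  push_cast
  ring_nf

lemma fourierCoef_eq_fourierCoeffOn (f : ℂ → ℂ) (k : ℤ) :
    fourierCoef f k = fourierCoeffOn zero_lt_one (fun s : ℝ => f s) k :=
  (fourierCoeffOn_zero_one _ k).symm

lemma fourierCoeffOn_deriv {a b : ℝ} (hab : a < b) {f f' : ℝ → ℂ}
    (hf : ∀ x ∈ Set.uIcc a b, HasDerivAt f (f' x) x) (hf' : IntervalIntegrable f' volume a b)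
    (hfab : f a = f b) (n : ℤ) :
    fourierCoeffOn hab f' n = 2 * π * I * n / (b - a) * fourierCoeffOn hab f n := by
  rcases eq_or_ne n 0 with rfl | hn
  · rw [fourierCoeffOn_eq_integral]
    simp only [neg_zero, fourier_zero, one_smul, Int.cast_zero, mul_zero, zero_div, zero_mul]
    rw [intervalIntegral.integral_eq_sub_of_hasDerivAt hf hf', hfab, sub_self, smul_zero]
  · rw [fourierCoeffOn_of_hasDerivAt hab hn hf hf', hfab, sub_self, mul_zero, zero_sub]
    have : (b - a : ℂ) ≠ 0 := sub_ne_zero.mpr (by exact_mod_cast hab.ne')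
    field_simp

def horizontalTrace (g : ℂ → ℂ) (y : ℝ) : ℝ → ℂ := fun s => g (s + y * I)

section HorizontalShift

variable {ρ y : ℝ} {g : ℂ → ℂ}

/-- Cauchy's theorem on the rectangle `[0, 1] × [0, y]`: periodicity makes the vertical sides
cancel. -/
lemma integral_horizontalTrace_eq (hd : DifferentiableOn ℂ g (Strip ρ))
    (hp : ∀ w ∈ Strip ρ, g (w + 1) = g w) (hy : |y| < ρ) :
    ∫ x in (0:ℝ)..1, horizontalTrace g y x = ∫ x in (0:ℝ)..1, g x := by
  have hrect : Set.uIcc (0:ℂ).re (1 + y * I : ℂ).re ×ℂ Set.uIcc (0:ℂ).im (1 + y * I : ℂ).im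
      ⊆ Strip ρ := fun w hw => mem_strip_of_im_mem_uIcc hy (by simpa using hw.2)
  have hcauchy :=
    Complex.integral_boundary_rect_eq_zero_of_differentiableOn g 0 (1 + y * I) (hd.mono hrect)
  have hsides : ∫ t in (0:ℝ)..y, g (1 + t * I) = ∫ t in (0:ℝ)..y, g (t * I) := by
    refine intervalIntegral.integral_congr fun t ht => ?_
    rw [add_comm (1 : ℂ), hp]
    exact mem_strip_of_im_mem_uIcc hy (by simpa using ht)
  simp only [zero_re, zero_im, add_re, one_re, mul_re, I_re, I_im, ofReal_re, ofReal_im,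
    add_im, one_im, mul_im, mul_zero, mul_one, sub_zero, zero_mul, add_zero, ofReal_zero,
    ofReal_one, zero_add, smul_eq_mul, hsides] at hcauchy
  unfold horizontalTrace
  linear_combination -hcauchy

lemma fourierCoeffOn_horizontalTrace (hd : DifferentiableOn ℂ g (Strip ρ))
    (hp : ∀ w ∈ Strip ρ, g (w + 1) = g w) (hy : |y| < ρ) (k : ℤ) :
    fourierCoeffOn zero_lt_one (horizontalTrace g y) k
      = Real.exp (-(2 * π * k * y)) * fourierCoef g k := by
  set Φ : ℂ → ℂ := fun w => g w * exp (-2 * π * I * k * w)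
  have hΦd : DifferentiableOn ℂ Φ (Strip ρ) := hd.mul (by fun_prop)
  have hΦp : ∀ w ∈ Strip ρ, Φ (w + 1) = Φ w := by
    intro w hw
    have : -2 * π * I * k * (w + 1) = -2 * π * I * k * w + (-k : ℤ) * (2 * π * I) := by
      push_cast; ring
    simp only [Φ, hp w hw, this, Complex.exp_add, exp_int_mul_two_pi_mul_I, mul_one]
  have hshift := integral_horizontalTrace_eq hΦd hΦp hy
  rw [fourierCoef, ← hshift, fourierCoeffOn_zero_one, ofReal_exp,
    ← intervalIntegral.integral_const_mul]
  refine intervalIntegral.integral_congr fun s _ => ?_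
  simp only [horizontalTrace, Φ]
  rw [mul_left_comm, ← Complex.exp_add]
  congr 2
  push_cast
  linear_combination (2 * π * k * y) * I_sq

end HorizontalShift

section RealLine

variable {ρ : ℝ} {g : ℂ → ℂ}

lemma fourierCoef_deriv (hρ : 0 < ρ) (hd : DifferentiableOn ℂ g (Strip ρ))
    (hp : ∀ w ∈ Strip ρ, g (w + 1) = g w) (k : ℤ) :
    fourierCoef (deriv g) k = 2 * π * I * k * fourierCoef g k := by
  have hreal : ∀ s : ℝ, (s : ℂ) ∈ Strip ρ := fun s => by simpa [Strip] using hρ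
  have hderiv : ∀ s : ℝ, HasDerivAt (fun t : ℝ => g t) (deriv g s) s := fun s =>
    (hd.differentiableAt ((isOpen_strip ρ).mem_nhds (hreal s))).hasDerivAt.comp_ofReal
  have hcont : Continuous (fun s : ℝ => deriv g s) :=
    (hd.deriv (isOpen_strip ρ)).continuousOn.comp_continuous continuous_ofReal hreal
  have hper : g (0 : ℝ) = g (1 : ℝ) := by simpa using (hp 0 (hreal 0)).symm
  rw [fourierCoef_eq_fourierCoeffOn, fourierCoef_eq_fourierCoeffOn,
    fourierCoeffOn_deriv zero_lt_one (fun s _ => hderiv s) (hcont.intervalIntegrable 0 1) hper]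
  simp

lemma fourierCoef_iteratedDeriv (hρ : 0 < ρ) (hd : DifferentiableOn ℂ g (Strip ρ))
    (hp : ∀ w ∈ Strip ρ, g (w + 1) = g w) (α : ℕ) (k : ℤ) :
    fourierCoef (iteratedDeriv α g) k = (2 * π * I * k) ^ α * fourierCoef g k := by
  induction α with
  | zero => simp
  | succ α ih =>
    rw [iteratedDeriv_succ, fourierCoef_deriv hρ (differentiableOn_iteratedDeriv hd α)
      (iteratedDeriv_add_one_of_periodic hp α), ih, pow_succ]
    ring

lemma norm_fourierCoef_iteratedDeriv (hρ : 0 < ρ) (hd : DifferentiableOn ℂ g (Strip ρ))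
    (hp : ∀ w ∈ Strip ρ, g (w + 1) = g w) (α : ℕ) (k : ℤ) :
    ‖fourierCoef (iteratedDeriv α g) k‖ = (2 * π * |(k:ℝ)|) ^ α * ‖fourierCoef g k‖ := by
  rw [fourierCoef_iteratedDeriv hρ hd hp, norm_mul, norm_pow]
  simp [abs_of_pos Real.pi_pos]

end RealLine

lemma L2Tnorm_nonneg (h : ℝ → ℂ) : 0 ≤ L2Tnorm h := by
  rw [L2Tnorm, ← Real.sqrt_eq_rpow]
  exact Real.sqrt_nonneg _

lemma L2Tnorm_sq (h : ℝ → ℂ) : L2Tnorm h ^ 2 = ∫ s in (0:ℝ)..1, ‖h s‖ ^ 2 := by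
  rw [L2Tnorm, ← Real.sqrt_eq_rpow, Real.sq_sqrt]
  exact intervalIntegral.integral_nonneg zero_le_one fun s _ => by positivity

section Parseval

variable {ρ y : ℝ} {g : ℂ → ℂ}

lemma continuous_horizontalTrace (hd : DifferentiableOn ℂ g (Strip ρ)) (hy : |y| < ρ) :
    Continuous (horizontalTrace g y) :=
  hd.continuousOn.comp_continuous (by fun_prop) (add_mul_I_mem_strip hy)

lemma hasSum_sq_fourierCoef_horizontalTrace (hd : DifferentiableOn ℂ g (Strip ρ))
    (hp : ∀ w ∈ Strip ρ, g (w + 1) = g w) (hy : |y| < ρ) :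
    HasSum (fun k : ℤ => (Real.exp (-(2 * π * k * y)) * ‖fourierCoef g k‖) ^ 2)
      (L2Tnorm (horizontalTrace g y) ^ 2) := by
  have hc := continuous_horizontalTrace hd hy
  have hL2 : MemLp (horizontalTrace g y) 2 (volume.restrict (Set.Ioc 0 1)) :=
    (memLp_two_iff_integrable_sq_norm hc.aestronglyMeasurable).2 (hc.norm.pow 2).integrableOn_Ioc
  have hparseval := hasSum_sq_fourierCoeffOn zero_lt_one hL2
  simp only [fourierCoeffOn_horizontalTrace hd hp hy, norm_mul, norm_real, Real.norm_eq_abs,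
    abs_of_pos (Real.exp_pos _), sub_zero, inv_one, one_smul] at hparseval
  rwa [L2Tnorm_sq]

end Parseval

/-- For `|t| < ρ`, `exp (c t |k|)` is one of `exp (-(c k t))` and `exp (-(c k (-t)))`; then let
`t → ρ`. -/
lemma sum_sq_exp_mul_abs_le {ρ c B : ℝ} (hρ : 0 < ρ) {b : ℤ → ℝ}
    (h : ∀ y, |y| < ρ → ∀ s : Finset ℤ, ∑ k ∈ s, (Real.exp (-(c * k * y)) * b k) ^ 2 ≤ B)
    (s : Finset ℤ) : ∑ k ∈ s, (Real.exp (c * ρ * |(k:ℝ)|) * b k) ^ 2 ≤ 2 * B := by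
  set F : ℝ → ℝ := fun t => ∑ k ∈ s, (Real.exp (c * t * |(k:ℝ)|) * b k) ^ 2
  have hF : Continuous F := by fun_prop
  have hbound : ∀ t ∈ Set.Ioo (-ρ) ρ, F t ≤ 2 * B := by
    intro t ht
    have hpos : |t| < ρ := abs_lt.2 ht
    have hneg : |-t| < ρ := by rwa [abs_neg]
    calc F t ≤ ∑ k ∈ s, ((Real.exp (-(c * k * t)) * b k) ^ 2
            + (Real.exp (-(c * k * -t)) * b k) ^ 2) := by
          refine Finset.sum_le_sum fun k _ => ?_
          rcases abs_choice (k : ℝ) with hk | hk <;> rw [hk]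
          · exact le_add_of_nonneg_of_le (sq_nonneg _) (le_of_eq (by ring_nf))
          · exact le_add_of_le_of_nonneg (le_of_eq (by ring_nf)) (sq_nonneg _)
      _ ≤ B + B := by rw [Finset.sum_add_distrib]; exact add_le_add (h t hpos s) (h (-t) hneg s)
      _ = 2 * B := by ring
  exact le_of_tendsto (hF.tendsto ρ |>.mono_left nhdsWithin_le_nhds)
    (Filter.eventually_of_mem (Ioo_mem_nhdsLT (by linarith)) hbound)

def supL2Trace (ρ : ℝ) (g : ℂ → ℂ) : ℝ :=
  sSup {r : ℝ | ∃ y : ℝ, |y| < ρ ∧ r = L2Tnorm (horizontalTrace g y)}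

lemma supL2Trace_nonneg (ρ : ℝ) (g : ℂ → ℂ) : 0 ≤ supL2Trace ρ g :=
  Real.sSup_nonneg fun _ ⟨_, _, hr⟩ => hr ▸ L2Tnorm_nonneg _

def expWeightedCoef (ρ : ℝ) (g : ℂ → ℂ) (k : ℤ) : ℝ :=
  Real.exp (2 * π * ρ * |(k:ℝ)|) * ‖fourierCoef g k‖

lemma expWeightedCoef_nonneg (ρ : ℝ) (g : ℂ → ℂ) (k : ℤ) : 0 ≤ expWeightedCoef ρ g k := by
  unfold expWeightedCoef
  positivity

/-- Membership in the Hardy space `H²` of 1-periodic holomorphic functions on the strip. -/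
def MemPeriodicHardy (ρ : ℝ) (g : ℂ → ℂ) : Prop :=
  DifferentiableOn ℂ g (Strip ρ) ∧ (∀ w ∈ Strip ρ, g (w + 1) = g w) ∧
    BddAbove {r : ℝ | ∃ y : ℝ, |y| < ρ ∧ r = L2Tnorm (horizontalTrace g y)}

namespace MemPeriodicHardy

variable {ρ : ℝ} {g : ℂ → ℂ}

lemma sum_sq_expWeightedCoef_le (hg : MemPeriodicHardy ρ g) (hρ : 0 < ρ) (s : Finset ℤ) :
    ∑ k ∈ s, expWeightedCoef ρ g k ^ 2 ≤ 2 * supL2Trace ρ g ^ 2 := by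
  refine sum_sq_exp_mul_abs_le hρ (fun y hy s => ?_) s
  have hparseval := hasSum_sq_fourierCoef_horizontalTrace hg.1 hg.2.1 hy
  refine (sum_le_hasSum s (fun k _ => sq_nonneg _) hparseval).trans ?_
  exact pow_le_pow_left₀ (L2Tnorm_nonneg _) (le_csSup hg.2.2 ⟨y, hy, rfl⟩) 2

lemma summable_sq_expWeightedCoef (hg : MemPeriodicHardy ρ g) (hρ : 0 < ρ) :
    Summable fun k => expWeightedCoef ρ g k ^ 2 :=
  summable_of_sum_le (fun _ => sq_nonneg _) (hg.sum_sq_expWeightedCoef_le hρ)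

lemma tsum_sq_expWeightedCoef_le (hg : MemPeriodicHardy ρ g) (hρ : 0 < ρ) :
    ∑' k, expWeightedCoef ρ g k ^ 2 ≤ 2 * supL2Trace ρ g ^ 2 :=
  (hg.summable_sq_expWeightedCoef hρ).tsum_le_of_sum_le (hg.sum_sq_expWeightedCoef_le hρ)

lemma supL2Trace_le_sqrt_tsum (hg : MemPeriodicHardy ρ g) (hρ : 0 < ρ) :
    supL2Trace ρ g ≤ √(∑' k, expWeightedCoef ρ g k ^ 2) := by
  refine csSup_le ⟨_, 0, by simpa using hρ, rfl⟩ fun r ⟨y, hy, hr⟩ => ?_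
  have hparseval := hasSum_sq_fourierCoef_horizontalTrace hg.1 hg.2.1 hy
  rw [hr, ← Real.sqrt_sq (L2Tnorm_nonneg _), ← hparseval.tsum_eq]
  refine Real.sqrt_le_sqrt (Summable.tsum_le_tsum (fun k => ?_) hparseval.summable
    (hg.summable_sq_expWeightedCoef hρ))
  have hky : -((k:ℝ) * y) ≤ |(k:ℝ)| * ρ :=
    (neg_le_abs _).trans (by rw [abs_mul]; exact mul_le_mul_of_nonneg_left hy.le (abs_nonneg _))
  unfold expWeightedCoef
  gcongr
  nlinarith [Real.pi_pos]

end MemPeriodicHardy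

lemma one_add_pow_sq_le (l : ℕ) {x : ℝ} (hx : 0 ≤ x) :
    (1 + x ^ l) ^ 2 ≤ 2 * (1 + ((2 * π * x) ^ l) ^ 2) := by
  have hx' : x ^ l ≤ (2 * π * x) ^ l := by
    gcongr
    nlinarith [Real.pi_gt_three]
  nlinarith [sq_nonneg (x ^ l - 1), pow_nonneg hx l]

lemma two_pi_mul_pow_le {α l : ℕ} (hα : α ≤ l) {x : ℝ} (hx : 0 ≤ x) :
    (2 * π * x) ^ α ≤ (2 * π) ^ α * (1 + x ^ l) := by
  rw [mul_pow]
  gcongr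
  rcases le_or_gt x 1 with h | h
  · linarith [pow_le_one₀ hx h (n := α), pow_nonneg hx l]
  · linarith [pow_le_pow_right₀ h.le hα]

lemma Knorm_eq_sum_supL2Trace (l : ℕ) (ρ : ℝ) (f : ℂ → ℂ) :
    Knorm l ρ f = ∑ α ∈ Finset.range (l + 1), supL2Trace ρ (iteratedDeriv α f) :=
  rfl

lemma fourierWeightedNorm_eq_sqrt (l : ℕ) (ρ : ℝ) (f : ℂ → ℂ) :
    fourierWeightedNorm l ρ f = √(∑' k : ℤ, ((1 + |(k:ℝ)| ^ l) * expWeightedCoef ρ f k) ^ 2) := by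
  rw [fourierWeightedNorm, Real.sqrt_eq_rpow]
  congr 2 with k
  rw [expWeightedCoef]
  ring

namespace MemK

variable {l : ℕ} {ρ : ℝ} {f : ℂ → ℂ}

lemma memPeriodicHardy_iteratedDeriv (hf : MemK l ρ f) {α : ℕ} (hα : α ≤ l) :
    MemPeriodicHardy ρ (iteratedDeriv α f) :=
  ⟨differentiableOn_iteratedDeriv hf.1 α, iteratedDeriv_add_one_of_periodic hf.2.1 α,
    (hf.2.2 α hα).2⟩

lemma expWeightedCoef_iteratedDeriv (hf : MemK l ρ f) (hρ : 0 < ρ) (α : ℕ) (k : ℤ) :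
    expWeightedCoef ρ (iteratedDeriv α f) k = (2 * π * |(k:ℝ)|) ^ α * expWeightedCoef ρ f k := by
  rw [expWeightedCoef, expWeightedCoef, norm_fourierCoef_iteratedDeriv hρ hf.1 hf.2.1]
  ring

lemma tsum_sq_weighted_le (hf : MemK l ρ f) (hρ : 0 < ρ) :
    Summable (fun k : ℤ => ((1 + |(k:ℝ)| ^ l) * expWeightedCoef ρ f k) ^ 2) ∧
    ∑' k : ℤ, ((1 + |(k:ℝ)| ^ l) * expWeightedCoef ρ f k) ^ 2
      ≤ 4 * (supL2Trace ρ (iteratedDeriv 0 f) ^ 2 + supL2Trace ρ (iteratedDeriv l f) ^ 2) := by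
  set u : ℕ → ℤ → ℝ := fun α k => expWeightedCoef ρ (iteratedDeriv α f) k ^ 2
  have h0 := hf.memPeriodicHardy_iteratedDeriv (Nat.zero_le l)
  have hl := hf.memPeriodicHardy_iteratedDeriv le_rfl
  have hsum := ((h0.summable_sq_expWeightedCoef hρ).mul_left 2).add
    ((hl.summable_sq_expWeightedCoef hρ).mul_left 2)
  have hle : ∀ k : ℤ, ((1 + |(k:ℝ)| ^ l) * expWeightedCoef ρ f k) ^ 2 ≤ 2 * u 0 k + 2 * u l k := by
    intro k
    simp only [u, hf.expWeightedCoef_iteratedDeriv hρ]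
    calc _ = expWeightedCoef ρ f k ^ 2 * (1 + |(k:ℝ)| ^ l) ^ 2 := by ring
      _ ≤ expWeightedCoef ρ f k ^ 2 * (2 * (1 + ((2 * π * |(k:ℝ)|) ^ l) ^ 2)) := by
        gcongr
        exact one_add_pow_sq_le l (abs_nonneg _)
      _ = _ := by ring
  have hW := hsum.of_nonneg_of_le (fun k => sq_nonneg _) hle
  refine ⟨hW, ?_⟩
  calc _ ≤ ∑' k, (2 * u 0 k + 2 * u l k) := hW.tsum_le_tsum hle hsum
    _ = 2 * ∑' k, u 0 k + 2 * ∑' k, u l k := by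
      rw [Summable.tsum_add ((h0.summable_sq_expWeightedCoef hρ).mul_left 2)
        ((hl.summable_sq_expWeightedCoef hρ).mul_left 2), tsum_mul_left, tsum_mul_left]
    _ ≤ _ := by
      linarith [h0.tsum_sq_expWeightedCoef_le hρ, hl.tsum_sq_expWeightedCoef_le hρ]

lemma fourierWeightedNorm_le_four_mul_Knorm (hf : MemK l ρ f) (hρ : 0 < ρ) :
    fourierWeightedNorm l ρ f ≤ 4 * Knorm l ρ f := by
  have hM : ∀ α ≤ l, supL2Trace ρ (iteratedDeriv α f) ≤ Knorm l ρ f := fun α hα =>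
    Finset.single_le_sum (fun β _ => supL2Trace_nonneg ρ (iteratedDeriv β f))
      (Finset.mem_range_succ_iff.mpr hα)
  have h0 := supL2Trace_nonneg ρ (iteratedDeriv 0 f)
  have hl := supL2Trace_nonneg ρ (iteratedDeriv l f)
  rw [fourierWeightedNorm_eq_sqrt, Real.sqrt_le_left (by linarith [hM 0 (Nat.zero_le l)])]
  nlinarith [(hf.tsum_sq_weighted_le hρ).2, hM 0 (Nat.zero_le l), hM l le_rfl]

lemma supL2Trace_iteratedDeriv_le (hf : MemK l ρ f) (hρ : 0 < ρ) {α : ℕ} (hα : α ≤ l) :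
    supL2Trace ρ (iteratedDeriv α f) ≤ (2 * π) ^ α * fourierWeightedNorm l ρ f := by
  have hle : ∀ k : ℤ, expWeightedCoef ρ (iteratedDeriv α f) k ^ 2
      ≤ ((2 * π) ^ α) ^ 2 * ((1 + |(k:ℝ)| ^ l) * expWeightedCoef ρ f k) ^ 2 := by
    intro k
    have he := expWeightedCoef_nonneg ρ f k
    rw [hf.expWeightedCoef_iteratedDeriv hρ, ← mul_pow, ← mul_assoc]
    gcongr
    exact two_pi_mul_pow_le hα (abs_nonneg _)
  have hα' := hf.memPeriodicHardy_iteratedDeriv hα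
  calc supL2Trace ρ (iteratedDeriv α f)
      ≤ √(∑' k, expWeightedCoef ρ (iteratedDeriv α f) k ^ 2) := hα'.supL2Trace_le_sqrt_tsum hρ
    _ ≤ √(((2 * π) ^ α) ^ 2 * ∑' k : ℤ, ((1 + |(k:ℝ)| ^ l) * expWeightedCoef ρ f k) ^ 2) := by
        rw [← tsum_mul_left]
        exact Real.sqrt_le_sqrt (Summable.tsum_le_tsum hle (hα'.summable_sq_expWeightedCoef hρ)
          ((hf.tsum_sq_weighted_le hρ).1.mul_left _))
    _ = (2 * π) ^ α * fourierWeightedNorm l ρ f := by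
        rw [Real.sqrt_mul (by positivity), Real.sqrt_sq (by positivity),
          fourierWeightedNorm_eq_sqrt]

end MemK

theorem Knorm_equiv_fourier_weighted_norm (l : ℕ) :
    ∃ c C : ℝ, 0 < c ∧ 0 < C ∧
      ∀ ρ : ℝ, 0 < ρ → ∀ f : ℂ → ℂ, MemK l ρ f →
        c * fourierWeightedNorm l ρ f ≤ Knorm l ρ f ∧
        Knorm l ρ f ≤ C * fourierWeightedNorm l ρ f := by
  refine ⟨1 / 4, ∑ α ∈ Finset.range (l + 1), (2 * π) ^ α, by norm_num,
    Finset.sum_pos (fun α _ => by positivity) ⟨0, by simp⟩, fun ρ hρ f hf => ⟨?_, ?_⟩⟩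
  · linarith [hf.fourierWeightedNorm_le_four_mul_Knorm hρ]
  · rw [Knorm_eq_sum_supL2Trace, Finset.sum_mul]
    exact Finset.sum_le_sum fun α hα =>
      hf.supL2Trace_iteratedDeriv_le hρ (Finset.mem_range_succ_iff.mp hα)

end
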